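/- arXiv:1609.08733 — 3 statements merged into one kernel-verified Lean document; each statement's English description precedes it below -/
import Mathlib

section
/- Let L be a real n×n matrix, w ∈ ℝⁿ and λ, Λ ∈ ℝ with L w = λ w. If Λ satisfies the quadratic equation Λ² − (λ+2)Λ + λ = 0 (in particular Λ = (λ + 2 + √(λ²+4))/2 is such a root), then Λ ≠ 1 and the stacked vector [wᵀ, αᵀ]ᵀ with α = (1−Λ)⁻¹ w satisfies W₁(L)·[wᵀ, αᵀ]ᵀ = Λ·[wᵀ, αᵀ]ᵀ, i.e. it is an eigenvector of the whiskered matrix with eigenvalue Λ whenever w ≠ 0. -/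
open Matrix

/-- The whiskered matrix `W₁(L) = [[L+I, −I], [−I, I]]`. -/
noncomputable def whisker1 {n : ℕ} (L : Matrix (Fin n) (Fin n) ℝ) :
    Matrix (Fin n ⊕ Fin n) (Fin n ⊕ Fin n) ℝ :=
  Matrix.fromBlocks (L + 1) (-1) (-1) 1

/-! Writing the lifted vector as `(w, α)`, the two block rows of `W₁(L) (w, α) = Λ (w, α)` read
`(λ + 1) w - α = Λ w` and `α - w = Λ α`. The second forces `α = (1 - Λ)⁻¹ w`; substituted into
the first it leaves exactly the quadratic `Λ² - (λ + 2) Λ + λ = 0`, which has no root at `Λ = 1`. -/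

theorem whisker1_mulVec_sumElim {n : ℕ} (L : Matrix (Fin n) (Fin n) ℝ) (x y : Fin n → ℝ) :
    whisker1 L *ᵥ Sum.elim x y = Sum.elim (L *ᵥ x + x - y) (y - x) := by
  simp only [whisker1, fromBlocks_mulVec, Sum.elim_comp_inl, Sum.elim_comp_inr, add_mulVec,
    one_mulVec, neg_mulVec]
  congr 1; abel

theorem ne_one_of_whisker_quadratic {lam Lam : ℝ} (h : Lam ^ 2 - (lam + 2) * Lam + lam = 0) :
    Lam ≠ 1 := by
  rintro rfl
  linarith

theorem whisker_quadratic_largeRoot (lam : ℝ) :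
    ((lam + 2 + √(lam ^ 2 + 4)) / 2) ^ 2
      - (lam + 2) * ((lam + 2 + √(lam ^ 2 + 4)) / 2) + lam = 0 := by
  have hsq : √(lam ^ 2 + 4) ^ 2 = lam ^ 2 + 4 := Real.sq_sqrt (by positivity)
  linear_combination hsq / 4

theorem whisker1_mulVec_lift {n : ℕ} {L : Matrix (Fin n) (Fin n) ℝ} {w : Fin n → ℝ}
    {lam Lam : ℝ} (hw : L *ᵥ w = lam • w) (hLam : Lam ^ 2 - (lam + 2) * Lam + lam = 0) :
    whisker1 L *ᵥ Sum.elim w ((1 - Lam)⁻¹ • w) = Lam • Sum.elim w ((1 - Lam)⁻¹ • w) := by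
  have h1 : 1 - Lam ≠ 0 := sub_ne_zero.mpr (ne_one_of_whisker_quadratic hLam).symm
  rw [whisker1_mulVec_sumElim, hw]
  ext (i | i)
  · simp only [Sum.elim_inl, Pi.add_apply, Pi.sub_apply, Pi.smul_apply, smul_eq_mul]
    field_simp
    linear_combination w i * hLam
  · simp only [Sum.elim_inr, Pi.sub_apply, Pi.smul_apply, smul_eq_mul]
    field_simp
    ring

theorem sumElim_ne_zero_of_left_ne_zero {α β M : Type*} [Zero M] {f : α → M} (g : β → M)
    (hf : f ≠ 0) : Sum.elim f g ≠ 0 := fun h =>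
  hf (by simpa using congrArg (· ∘ Sum.inl) h)

theorem whisker1_eigenvector_lift {n : ℕ} (L : Matrix (Fin n) (Fin n) ℝ)
    (w : Fin n → ℝ) (lam Lam : ℝ) (hw : L.mulVec w = lam • w)
    (hLam : Lam ^ 2 - (lam + 2) * Lam + lam = 0) :
    ((lam + 2 + Real.sqrt (lam ^ 2 + 4)) / 2) ^ 2
        - (lam + 2) * ((lam + 2 + Real.sqrt (lam ^ 2 + 4)) / 2) + lam = 0 ∧
    Lam ≠ 1 ∧
    (whisker1 L).mulVec (Sum.elim w ((1 - Lam)⁻¹ • w))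
      = Lam • Sum.elim w ((1 - Lam)⁻¹ • w) ∧
    (w ≠ 0 → Sum.elim w ((1 - Lam)⁻¹ • w) ≠ 0) :=
  ⟨whisker_quadratic_largeRoot lam, ne_one_of_whisker_quadratic hLam,
    whisker1_mulVec_lift hw hLam, sumElim_ne_zero_of_left_ne_zero _⟩
end

section
/- Let L be a real n×n matrix and suppose [w₁ᵀ, w₂ᵀ, w₃ᵀ, w₄ᵀ]ᵀ ∈ ℝ^{4n} is a nonzero vector with W₂(L)·[w₁ᵀ, w₂ᵀ, w₃ᵀ, w₄ᵀ]ᵀ = λ·[w₁ᵀ, w₂ᵀ, w₃ᵀ, w₄ᵀ]ᵀ for some λ ∈ ℝ with (λ−1)(λ² − 3λ + 1) ≠ 0. Then w₂ = (1−λ)⁻¹ w₁, w₃ = ((1−λ)/(λ² − 3λ + 1)) w₁, w₄ = (1−λ)⁻¹ w₃, the component w₁ is nonzero, and w₁ is an eigenvector of L with eigenvalue Λ = λ − 2 + 1/(1−λ) + (1−λ)/(λ² − 3λ + 1). -/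
/-!
Read block by block, the eigen-equation says `(1 - λ) w₂ = w₁` on the leaf and `(1 - λ) w₄ = w₃`
at the end of the path; eliminating `w₄` from the middle row of the path gives
`(λ² - 3λ + 1) w₃ = (1 - λ) w₁`, since `(2 - λ)(1 - λ) - 1 = λ² - 3λ + 1`. Substituting `w₂` and
`w₃` into the root row turns it into the eigen-equation for `L`, and `w₁ = 0` would force all four
blocks to vanish.
-/

open Matrix

/-- The path-whiskered matrix
`W₂(L) = [[L+2I, −I, −I, 0], [−I, I, 0, 0], [−I, 0, 2I, −I], [0, 0, −I, I]]`. -/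
noncomputable def whisker2 {n : ℕ} (L : Matrix (Fin n) (Fin n) ℝ) :
    Matrix ((Fin n ⊕ Fin n) ⊕ (Fin n ⊕ Fin n)) ((Fin n ⊕ Fin n) ⊕ (Fin n ⊕ Fin n)) ℝ :=
  Matrix.fromBlocks
    (Matrix.fromBlocks (L + 2) (-1) (-1) 1)
    (Matrix.fromBlocks (-1) 0 0 0)
    (Matrix.fromBlocks (-1) 0 0 0)
    (Matrix.fromBlocks 2 (-1) (-1) 1)

section PendantPath

variable {K V : Type*} [Field K] [AddCommGroup V] [Module K V]

theorem eq_inv_one_sub_smul_of_sub_eq_smul {lam : K} (hlam : 1 - lam ≠ 0) {u v : V}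
    (h : v - u = lam • v) : v = (1 - lam)⁻¹ • u := by
  rw [eq_inv_smul_iff₀ hlam, sub_smul, one_smul, ← h]
  abel

theorem eq_smul_of_two_smul_sub_sub_eq_smul {lam : K} (hlam : 1 - lam ≠ 0)
    (hq : lam ^ 2 - 3 * lam + 1 ≠ 0) {u x y : V} (hy : y = (1 - lam)⁻¹ • x)
    (hx : (2 : K) • x - u - y = lam • x) :
    x = ((1 - lam) / (lam ^ 2 - 3 * lam + 1)) • u := by
  have hu : u = ((lam ^ 2 - 3 * lam + 1) / (1 - lam)) • x := by
    have hscalar : (lam ^ 2 - 3 * lam + 1) / (1 - lam) = 2 - lam - (1 - lam)⁻¹ := by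
      field_simp
      ring
    rw [hscalar, sub_smul, sub_smul, ← hy, ← hx]
    abel
  rw [hu, smul_smul, div_mul_div_cancel₀ hq, div_self hlam, one_smul]

end PendantPath

theorem Sum.elim_smul_smul {α β R M : Type*} [SMul R M] (c : R) (f : α → M) (g : β → M) :
    Sum.elim (c • f) (c • g) = c • Sum.elim f g := by
  ext (a | b) <;> rfl

theorem whisker2_mulVec {n : ℕ} (L : Matrix (Fin n) (Fin n) ℝ) (w₁ w₂ w₃ w₄ : Fin n → ℝ) :
    whisker2 L *ᵥ Sum.elim (Sum.elim w₁ w₂) (Sum.elim w₃ w₄) =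
      Sum.elim (Sum.elim (L *ᵥ w₁ + (2 : ℝ) • w₁ - w₂ - w₃) (w₂ - w₁))
        (Sum.elim ((2 : ℝ) • w₃ - w₁ - w₄) (w₄ - w₃)) := by
  simp only [whisker2, fromBlocks_mulVec, Sum.elim_comp_inl, Sum.elim_comp_inr, add_mulVec,
    neg_mulVec, one_mulVec, zero_mulVec, ofNat_mulVec, ← Sum.elim_add_add, Sum.elim_eq_iff]
  refine ⟨⟨?_, ?_⟩, ?_, ?_⟩ <;> module

theorem whisker2_eigenvector_restrict {n : ℕ} (L : Matrix (Fin n) (Fin n) ℝ)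
    (w₁ w₂ w₃ w₄ : Fin n → ℝ) (lam : ℝ)
    (hne : Sum.elim (Sum.elim w₁ w₂) (Sum.elim w₃ w₄) ≠ 0)
    (hlam : (lam - 1) * (lam ^ 2 - 3 * lam + 1) ≠ 0)
    (heig : (whisker2 L).mulVec (Sum.elim (Sum.elim w₁ w₂) (Sum.elim w₃ w₄))
      = lam • Sum.elim (Sum.elim w₁ w₂) (Sum.elim w₃ w₄)) :
    w₂ = (1 - lam)⁻¹ • w₁ ∧
    w₃ = ((1 - lam) / (lam ^ 2 - 3 * lam + 1)) • w₁ ∧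
    w₄ = (1 - lam)⁻¹ • w₃ ∧
    w₁ ≠ 0 ∧
    L.mulVec w₁
      = (lam - 2 + 1 / (1 - lam) + (1 - lam) / (lam ^ 2 - 3 * lam + 1)) • w₁ := by
  obtain ⟨hlam_ne_one, hq⟩ := mul_ne_zero_iff.mp hlam
  have hlam' : 1 - lam ≠ 0 := sub_ne_zero.mpr (sub_ne_zero.mp hlam_ne_one).symm
  obtain ⟨⟨h_root, h_leaf⟩, h_mid, h_end⟩ := by
    simpa only [whisker2_mulVec, ← Sum.elim_smul_smul, Sum.elim_eq_iff] using heig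
  have hw₂ := eq_inv_one_sub_smul_of_sub_eq_smul hlam' h_leaf
  have hw₄ := eq_inv_one_sub_smul_of_sub_eq_smul hlam' h_end
  have hw₃ := eq_smul_of_two_smul_sub_sub_eq_smul hlam' hq hw₄ h_mid
  refine ⟨hw₂, hw₃, hw₄, ?_, ?_⟩
  · rintro rfl
    simp [hw₂, hw₃, hw₄] at hne
  · rw [hw₂, hw₃] at h_root
    linear_combination (norm := module) h_root
end

section
/- Let L ∈ ℝ^{n×n} be the Laplacian of a connected undirected graph (symmetric positive semidefinite, zero row sums, nonpositive off-diagonal entries, with grounded Laplacian L[2:n] positive definite). For an attachment node i ∈ {1,…,n}, let L'ᵢ = [[L + eᵢeᵢᵀ, −eᵢ], [−eᵢᵀ, 1]] ∈ ℝ^{(n+1)×(n+1)} be the Laplacian obtained by attaching a single new leaf node to node i. Then L'ᵢ[2:n+1] is positive definite and Tr((L'ᵢ[2:n+1])⁻¹) ≥ C + 1, where C = min over j ∈ {1,…,n} of Tr(((L + eⱼeⱼᵀ)[2:n])⁻¹); equivalently, the controllability Gramian P = ½(L'ᵢ[2:n+1])⁻¹ satisfies Tr(P) ≥ (C+1)/2.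 -/
open Matrix

/-- The principal submatrix of `A` obtained by deleting the row and column
indexed by `i₀` (grounding at node `i₀`). -/
def dropIdx {m : Type*} (i₀ : m) (A : Matrix m m ℝ) :
    Matrix {i : m // i ≠ i₀} {i : m // i ≠ i₀} ℝ :=
  A.submatrix Subtype.val Subtype.val

/-- The Laplacian obtained from `L` by attaching a single new leaf node to node `i`:
`[[L + eᵢeᵢᵀ, −eᵢ], [−eᵢᵀ, 1]]`. -/
noncomputable def leafAttach {n : ℕ} (L : Matrix (Fin n) (Fin n) ℝ) (i : Fin n) :
    Matrix (Fin n ⊕ Unit) (Fin n ⊕ Unit) ℝ :=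
  Matrix.fromBlocks
    (L + Matrix.vecMulVec (Pi.single i 1) (Pi.single i 1))
    (Matrix.replicateCol Unit (-(Pi.single i (1 : ℝ))))
    (Matrix.replicateRow Unit (-(Pi.single i (1 : ℝ))))
    1

/-!
Grounded at node `0` (the paper's node 1), the Laplacian with the new leaf becomes the bordered
matrix `M = [[G + vvᵀ, -v], [-vᵀ, 1]]` with `G = L[2:n]` and `v = eᵢ` (restricted). The Schur complement
of its leaf entry is `G`, so `M` is positive definite with
`M⁻¹ = [[G⁻¹, G⁻¹v], [vᵀG⁻¹, 1 + vᵀG⁻¹v]]`, whence `tr M⁻¹ ≥ tr G⁻¹ + 1`. By the Woodbury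
(Sherman–Morrison) identity `tr (G + vvᵀ)⁻¹ ≤ tr G⁻¹`, and `G + vvᵀ = (L + eᵢeᵢᵀ)[2:n]` is the
`j = i` candidate of the minimum.
-/

namespace Matrix

variable {m o : Type*} [Fintype m] [Fintype o]

theorem trace_submatrix_equiv {l R : Type*} [Fintype l] [AddCommMonoid R] (A : Matrix m m R)
    (e : l ≃ m) :
    trace (A.submatrix e e) = trace A :=
  Fintype.sum_equiv e _ _ fun _ => rfl

variable [DecidableEq m] [DecidableEq o]

/-- Grounded Laplacian `G` with new leaves attached: the columns of `B` are the attachment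
vectors, e.g. `B = eᵢ` hangs one leaf on node `i`. -/
def attachLeaves (G : Matrix m m ℝ) (B : Matrix m o ℝ) : Matrix (m ⊕ o) (m ⊕ o) ℝ :=
  fromBlocks (G + B * Bᴴ) (-B) (-Bᴴ) 1

variable {G : Matrix m m ℝ}

theorem attachLeaves_mul_fromBlocks (hG : IsUnit G.det) (B : Matrix m o ℝ) :
    attachLeaves G B * fromBlocks G⁻¹ (G⁻¹ * B) (Bᴴ * G⁻¹) (1 + Bᴴ * G⁻¹ * B) = 1 := by
  simp only [attachLeaves, fromBlocks_multiply, Matrix.add_mul, Matrix.mul_add, Matrix.neg_mul,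
    Matrix.one_mul, Matrix.mul_one, Matrix.mul_assoc, mul_nonsing_inv_cancel_left G _ hG,
    mul_nonsing_inv G hG]
  rw [← fromBlocks_one]
  congr 1 <;> abel

theorem inv_attachLeaves (hG : IsUnit G.det) (B : Matrix m o ℝ) :
    (attachLeaves G B)⁻¹ = fromBlocks G⁻¹ (G⁻¹ * B) (Bᴴ * G⁻¹) (1 + Bᴴ * G⁻¹ * B) :=
  inv_eq_right_inv (attachLeaves_mul_fromBlocks hG B)

theorem posDef_attachLeaves (hG : G.PosDef) (B : Matrix m o ℝ) : (attachLeaves G B).PosDef := by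
  let : Invertible (1 : Matrix o o ℝ) := invertibleOne
  have hpsd : (attachLeaves G B).PosSemidef := by
    -- the Schur complement of the leaf block is `G` itself
    have := (PosDef.fromBlocks₂₂ (G + B * Bᴴ) (-B) PosDef.one).2 (by simpa using hG.posSemidef)
    simpa [attachLeaves] using this
  refine hpsd.posDef_iff_isUnit.2 ((isUnit_iff_isUnit_det _).2 ?_)
  exact isUnit_det_of_right_inverse (attachLeaves_mul_fromBlocks (hG.det_pos.ne'.isUnit) B)

theorem trace_inv_attachLeaves (hG : IsUnit G.det) (B : Matrix m o ℝ) :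
    trace (attachLeaves G B)⁻¹ = trace G⁻¹ + Fintype.card o + trace (Bᴴ * G⁻¹ * B) := by
  rw [inv_attachLeaves hG]
  simp [trace, Fintype.sum_sum_type, add_assoc, Finset.sum_add_distrib]

theorem trace_inv_add_mul_conjTranspose_le (hG : G.PosDef) (B : Matrix m o ℝ) :
    trace (G + B * Bᴴ)⁻¹ ≤ trace G⁻¹ := by
  have hK : (1 + Bᴴ * G⁻¹ * B).PosDef :=
    PosDef.one.add_posSemidef (hG.inv.posSemidef.conjTranspose_mul_mul_same B)
  have hwoodbury := add_mul_mul_inv_eq_sub G B 1 Bᴴ hG.isUnit isUnit_one (by simpa using hK.isUnit)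
  rw [Matrix.mul_one, inv_one] at hwoodbury
  have hcorr : (G⁻¹ * B * (1 + Bᴴ * G⁻¹ * B)⁻¹ * Bᴴ * G⁻¹).PosSemidef := by
    have := hK.inv.posSemidef.mul_mul_conjTranspose_same (G⁻¹ * B)
    rwa [conjTranspose_mul, hG.inv.1.eq, ← Matrix.mul_assoc] at this
  rw [hwoodbury, trace_sub]
  linarith [hcorr.trace_nonneg]

theorem trace_inv_add_mul_conjTranspose_add_card_le (hG : G.PosDef) (B : Matrix m o ℝ) :
    trace (G + B * Bᴴ)⁻¹ + Fintype.card o ≤ trace (attachLeaves G B)⁻¹ := by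
  rw [trace_inv_attachLeaves (hG.det_pos.ne'.isUnit)]
  linarith [trace_inv_add_mul_conjTranspose_le hG B,
    (hG.inv.posSemidef.conjTranspose_mul_mul_same B).trace_nonneg]

end Matrix

def Equiv.subtypeSumInlNe {m o : Type*} (z : m) :
    {c : m ⊕ o // c ≠ Sum.inl z} ≃ {a // a ≠ z} ⊕ o :=
  Equiv.subtypeSum.trans <| Equiv.sumCongr
    (Equiv.subtypeEquivRight fun _ => Sum.inl_injective.ne_iff)
    (Equiv.subtypeUnivEquiv fun _ => Sum.inr_ne_inl)

theorem dropIdx_add_vecMulVec_self {m : Type*} (L : Matrix m m ℝ) (z : m) (v : m → ℝ) :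
    dropIdx z (L + vecMulVec v v) =
      dropIdx z L +
        replicateCol Unit (v ∘ Subtype.val) * (replicateCol Unit (v ∘ Subtype.val))ᴴ := by
  ext a b
  simp [dropIdx, ← vecMulVec_eq Unit, vecMulVec_apply]

theorem dropIdx_leafAttach {n : ℕ} (L : Matrix (Fin n) (Fin n) ℝ) (z i : Fin n) :
    dropIdx (Sum.inl z) (leafAttach L i) =
      (attachLeaves (dropIdx z L) (replicateCol Unit (Pi.single i 1 ∘ Subtype.val))).submatrix
        (Equiv.subtypeSumInlNe z) (Equiv.subtypeSumInlNe z) := by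
  ext ⟨a | u, ha⟩ ⟨b | u', hb⟩ <;>
    simp [dropIdx, leafAttach, attachLeaves, Equiv.subtypeSumInlNe, Equiv.subtypeSum,
      ← vecMulVec_eq Unit, vecMulVec_apply]

theorem leaf_attach_gramian_bound_general {n : ℕ} (hn : 0 < n)
    (L : Matrix (Fin n) (Fin n) ℝ)
    (hground : (dropIdx (⟨0, hn⟩ : Fin n) L).PosDef)
    (i : Fin n) :
    (dropIdx (Sum.inl ⟨0, hn⟩ : Fin n ⊕ Unit) (leafAttach L i)).PosDef ∧
    Matrix.trace ((dropIdx (Sum.inl ⟨0, hn⟩ : Fin n ⊕ Unit) (leafAttach L i))⁻¹)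
      ≥ (Finset.univ.inf' ⟨⟨0, hn⟩, Finset.mem_univ _⟩ fun j : Fin n =>
          Matrix.trace ((dropIdx (⟨0, hn⟩ : Fin n)
            (L + Matrix.vecMulVec (Pi.single j 1) (Pi.single j 1)))⁻¹)) + 1 ∧
    Matrix.trace
        ((2 : ℝ)⁻¹ • (dropIdx (Sum.inl ⟨0, hn⟩ : Fin n ⊕ Unit) (leafAttach L i))⁻¹)
      ≥ ((Finset.univ.inf' ⟨⟨0, hn⟩, Finset.mem_univ _⟩ fun j : Fin n =>
          Matrix.trace ((dropIdx (⟨0, hn⟩ : Fin n)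
            (L + Matrix.vecMulVec (Pi.single j 1) (Pi.single j 1)))⁻¹)) + 1) / 2 := by
  set z : Fin n := ⟨0, hn⟩
  set B := replicateCol Unit (Pi.single i (1 : ℝ) ∘ Subtype.val : {k // k ≠ z} → ℝ)
  have hpd : (dropIdx (Sum.inl z) (leafAttach L i)).PosDef := by
    rw [dropIdx_leafAttach]
    exact (posDef_attachLeaves hground B).submatrix (Equiv.injective _)
  have hbound : (Finset.univ.inf' ⟨z, Finset.mem_univ _⟩ fun j : Fin n =>
      trace (dropIdx z (L + vecMulVec (Pi.single j 1) (Pi.single j 1)))⁻¹) + 1 ≤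
      trace (dropIdx (Sum.inl z) (leafAttach L i))⁻¹ :=
    calc _ ≤ trace (dropIdx z (L + vecMulVec (Pi.single i 1) (Pi.single i 1)))⁻¹ + 1 := by
          gcongr
          exact Finset.inf'_le _ (Finset.mem_univ i)
      _ = trace (dropIdx z L + B * Bᴴ)⁻¹ + Fintype.card Unit := by
          rw [dropIdx_add_vecMulVec_self, Fintype.card_unit, Nat.cast_one]
      _ ≤ trace (attachLeaves (dropIdx z L) B)⁻¹ :=
          trace_inv_add_mul_conjTranspose_add_card_le hground B
      _ = trace (dropIdx (Sum.inl z) (leafAttach L i))⁻¹ := by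
          rw [dropIdx_leafAttach, inv_submatrix_equiv, trace_submatrix_equiv]
  refine ⟨hpd, hbound, ?_⟩
  rw [trace_smul, smul_eq_mul]
  linarith

theorem leaf_attach_gramian_bound {n : ℕ} (hn : 0 < n)
    (L : Matrix (Fin n) (Fin n) ℝ)
    (hsym : L.IsSymm) (hpsd : L.PosSemidef)
    (hrow : ∀ i, ∑ j, L i j = 0)
    (hoff : ∀ i j, i ≠ j → L i j ≤ 0)
    (hground : (dropIdx (⟨0, hn⟩ : Fin n) L).PosDef)
    (i : Fin n) :
    (dropIdx (Sum.inl ⟨0, hn⟩ : Fin n ⊕ Unit) (leafAttach L i)).PosDef ∧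
    Matrix.trace ((dropIdx (Sum.inl ⟨0, hn⟩ : Fin n ⊕ Unit) (leafAttach L i))⁻¹)
      ≥ (Finset.univ.inf' ⟨⟨0, hn⟩, Finset.mem_univ _⟩ fun j : Fin n =>
          Matrix.trace ((dropIdx (⟨0, hn⟩ : Fin n)
            (L + Matrix.vecMulVec (Pi.single j 1) (Pi.single j 1)))⁻¹)) + 1 ∧
    Matrix.trace
        ((2 : ℝ)⁻¹ • (dropIdx (Sum.inl ⟨0, hn⟩ : Fin n ⊕ Unit) (leafAttach L i))⁻¹)
      ≥ ((Finset.univ.inf' ⟨⟨0, hn⟩, Finset.mem_univ _⟩ fun j : Fin n =>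
          Matrix.trace ((dropIdx (⟨0, hn⟩ : Fin n)
            (L + Matrix.vecMulVec (Pi.single j 1) (Pi.single j 1)))⁻¹)) + 1) / 2 :=
  leaf_attach_gramian_bound_general hn L hground i
end
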